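/- arXiv:2502.04062 — 2 statements merged into one kernel-verified Lean document; each statement's English description precedes it below -/
import Mathlib

section
/- Failure of persistency of excitation propagates to the derivative along the same direction: let w : ℝ≥0 → ℝ^d be a smooth signal with bounded first and second derivatives. If w is not persistently exciting, then for every T > 0 and every ε > 0 there exist a time t > 0 and a unit vector z ∈ ℝ^d such that both |zᵀ w(τ)| ≤ ε and |zᵀ ẇ(τ)| ≤ ε hold for all τ ∈ [t, t+T]. -/
open Matrix

noncomputable def gramInt {ι : Type} (w : ℝ → ι → ℝ) (t T : ℝ) : Matrix ι ι ℝ :=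
  Matrix.of fun i j => ∫ τ in t..(t + T), w τ i * w τ j

def IsPECT {ι : Type} [Fintype ι] [DecidableEq ι] (w : ℝ → ι → ℝ) : Prop :=
  ∃ α : ℝ, 0 < α ∧ ∃ T : ℝ, 0 < T ∧ ∀ t : ℝ, 0 ≤ t → (gramInt w t T - α • 1).PosSemidef

/-!
Failure of persistency of excitation means that for every `α, T > 0` the Gram matrix of `w` on
some window `[t, t + T]` fails to dominate `α • 1`, i.e. some unit direction `z` has
`∫ ⟪z, w⟫² < α` there. Because `ẇ` is bounded, `⟪z, w⟫` is Lipschitz, so a small L² norm on the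
window forces a small sup norm. A first-order Taylor expansion with the bound `M` on `ẅ` then gives
`|⟪z, ẇ τ⟫| ≤ 2 ε₀ / δ + M δ / 2` whenever `|⟪z, w⟫| ≤ ε₀` at `τ` and `τ + δ`; choosing `δ` of
order `ε` and `ε₀` of order `ε δ` makes this at most `ε`.
-/

open Set MeasureTheory
open scoped NNReal InnerProductSpace

theorem HasDerivAt.const_inner {E : Type*} [NormedAddCommGroup E] [InnerProductSpace ℝ E]
    {f : ℝ → E} {f' : E} {x : ℝ} (z : E) (hf : HasDerivAt f f' x) :
    HasDerivAt (fun t => ⟪z, f t⟫_ℝ) ⟪z, f'⟫_ℝ x := by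
  simpa using (hasDerivAt_const x z).inner ℝ hf

theorem abs_inner_le_of_norm_eq_one {E : Type*} [NormedAddCommGroup E] [InnerProductSpace ℝ E]
    {z v : E} {C : ℝ} (hz : ‖z‖ = 1) (hv : ‖v‖ ≤ C) : |⟪z, v⟫_ℝ| ≤ C :=
  calc |⟪z, v⟫_ℝ| ≤ ‖z‖ * ‖v‖ := abs_real_inner_le_norm z v
    _ ≤ C := by rw [hz, one_mul]; exact hv

section Taylor

variable {f f' f'' : ℝ → ℝ} {M : ℝ}

theorem abs_sub_sub_mul_le_of_abs_deriv_deriv_le {a b : ℝ} (hab : a ≤ b)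
    (hf : ∀ x ∈ Icc a b, HasDerivAt f (f' x) x) (hf' : ∀ x ∈ Icc a b, HasDerivAt f' (f'' x) x)
    (hM : ∀ x ∈ Icc a b, |f'' x| ≤ M) :
    |f b - f a - (b - a) * f' a| ≤ M * (b - a) ^ 2 / 2 := by
  have hf'_lip : ∀ x ∈ Icc a b, |f' x - f' a| ≤ M * (x - a) := fun x hx => by
    simpa [Real.norm_eq_abs, abs_of_nonneg (sub_nonneg.2 hx.1)] using
      (convex_Icc a b).norm_image_sub_le_of_norm_hasDerivWithin_le
        (fun y hy => (hf' y hy).hasDerivWithinAt) hM (left_mem_Icc.2 hab) hx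
  refine image_norm_le_of_norm_deriv_right_le_deriv_boundary
    (f := fun x => f x - f a - (x - a) * f' a) (f' := fun x => f' x - f' a)
    (B := fun x => M * (x - a) ^ 2 / 2) (B' := fun x => M * (x - a)) ?_ ?_ ?_ ?_ ?_
    (right_mem_Icc.2 hab)
  · exact fun x hx => ((hf x hx).continuousAt.sub continuousAt_const).sub
      (by fun_prop) |>.continuousWithinAt
  · intro x hx
    exact ((((hf x (Ico_subset_Icc_self hx)).sub_const (f a)).sub
      (((hasDerivAt_id' x).sub_const a).mul_const (f' a))).congr_deriv (by ring)).hasDerivWithinAt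
  · simp
  · intro x
    exact ((((hasDerivAt_id' x).sub_const a).pow 2).const_mul M |>.div_const 2).congr_deriv
      (by ring)
  · exact fun x hx => hf'_lip x (Ico_subset_Icc_self hx)

theorem abs_deriv_le_of_abs_le {ε δ τ : ℝ} (hδ : 0 < δ)
    (hf : ∀ x ∈ Icc τ (τ + δ), HasDerivAt f (f' x) x)
    (hf' : ∀ x ∈ Icc τ (τ + δ), HasDerivAt f' (f'' x) x)
    (hM : ∀ x ∈ Icc τ (τ + δ), |f'' x| ≤ M) (hτ : |f τ| ≤ ε) (hτδ : |f (τ + δ)| ≤ ε) :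
    |f' τ| ≤ 2 * ε / δ + M * δ / 2 := by
  have htaylor := abs_sub_sub_mul_le_of_abs_deriv_deriv_le (by linarith) hf hf' hM
  rw [add_sub_cancel_left] at htaylor
  have hmul : δ * |f' τ| ≤ 2 * ε + M * δ ^ 2 / 2 := by
    have habs : |δ * f' τ| = δ * |f' τ| := by rw [abs_mul, abs_of_pos hδ]
    have := abs_sub (f (τ + δ)) (f τ)
    have := abs_sub (f (τ + δ) - f τ) (f (τ + δ) - f τ - δ * f' τ)
    rw [sub_sub_cancel] at this
    linarith
  rw [div_add_div _ _ hδ.ne' two_ne_zero, le_div_iff₀ (by positivity)]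
  nlinarith

end Taylor

theorem abs_le_of_integral_sq_lt {f : ℝ → ℝ} {a b ε : ℝ} {K : ℝ≥0} (hε : 0 ≤ ε)
    (hf : LipschitzOnWith K f (Icc a b))
    (hint : ∫ s in a..b, f s ^ 2 < min (ε / (2 * (K + 1))) (b - a) * (ε / 2) ^ 2) :
    ∀ τ ∈ Icc a b, |f τ| ≤ ε := by
  intro τ₀ hτ₀
  by_contra! hbig
  set r := min (ε / (2 * (K + 1))) (b - a)
  have hr : 0 ≤ r := le_min (by positivity) (sub_nonneg.2 (hτ₀.1.trans hτ₀.2))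
  have hKr : (K : ℝ) * r ≤ ε / 2 := calc
    (K : ℝ) * r ≤ (K + 1) * (ε / (2 * (K + 1))) := by gcongr; linarith; exact min_le_left _ _
    _ = ε / 2 := by field_simp
  -- `Icc c (c + r)` is a window inside `[a, b]` around `τ₀` on which `|f| ≥ ε / 2`
  set c := min τ₀ (b - r)
  have hsub : Icc c (c + r) ⊆ Icc a b := Icc_subset_Icc
    (le_min hτ₀.1 (by linarith [min_le_right (ε / (2 * (K + 1))) (b - a)]))
    (by linarith [min_le_right τ₀ (b - r)])
  have hτc : τ₀ ∈ Icc c (c + r) := ⟨min_le_left _ _, by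
    rcases min_choice τ₀ (b - r) with h | h <;> simp only [c, h] <;> linarith [hτ₀.2]⟩
  have hlower : ∀ s ∈ Icc c (c + r), (ε / 2) ^ 2 ≤ f s ^ 2 := by
    intro s hs
    have hdist : |f s - f τ₀| ≤ K * |s - τ₀| := by
      simpa only [Real.dist_eq] using hf.dist_le_mul s (hsub hs) τ₀ (hsub hτc)
    have hsτ : |s - τ₀| ≤ r :=
      abs_sub_le_iff.2 ⟨by linarith [hs.2, hτc.1], by linarith [hs.1, hτc.2]⟩
    have : ε / 2 ≤ |f s| := by
      have := abs_sub_abs_le_abs_sub (f τ₀) (f s)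
      rw [abs_sub_comm] at this
      nlinarith [mul_le_mul_of_nonneg_left hsτ K.2]
    simpa only [sq_abs] using pow_le_pow_left₀ (by positivity) this 2
  have hfc : ContinuousOn (fun s => f s ^ 2) (Icc a b) := hf.continuousOn.pow 2
  have hwindow : r * (ε / 2) ^ 2 ≤ ∫ s in c..c + r, f s ^ 2 := by
    have := intervalIntegral.integral_mono_on (le_add_of_nonneg_right hr)
      (intervalIntegrable_const (μ := volume)) ((hfc.mono hsub).intervalIntegrable_of_Icc
        (le_add_of_nonneg_right hr)) hlower
    rwa [intervalIntegral.integral_const, smul_eq_mul, add_sub_cancel_left] at this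
  have hmono : ∫ s in c..c + r, f s ^ 2 ≤ ∫ s in a..b, f s ^ 2 :=
    intervalIntegral.integral_mono_interval (hsub (left_mem_Icc.2 (le_add_of_nonneg_right hr))).1
      (le_add_of_nonneg_right hr) (hsub (right_mem_Icc.2 (le_add_of_nonneg_right hr))).2
      (Filter.Eventually.of_forall fun s => sq_nonneg (f s))
      (hfc.intervalIntegrable_of_Icc (hτ₀.1.trans hτ₀.2))
  linarith

theorem isHermitian_gramInt {ι : Type} (w : ℝ → ι → ℝ) (t T : ℝ) :
    (gramInt w t T).IsHermitian := by
  ext i j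
  simp only [conjTranspose_apply, gramInt, of_apply, star_trivial, mul_comm]

section Gram

variable {ι : Type} [Fintype ι]

theorem dotProduct_gramInt_mulVec {w : ℝ → ι → ℝ} (hw : Continuous w) (x : ι → ℝ) (t T : ℝ) :
    x ⬝ᵥ (gramInt w t T *ᵥ x) = ∫ τ in t..t + T, (x ⬝ᵥ w τ) ^ 2 := by
  simp_rw [sq, dotProduct, Finset.sum_mul_sum]
  have hint : ∀ {g : ℝ → ℝ}, Continuous g → IntervalIntegrable g volume t (t + T) :=
    fun hg => hg.intervalIntegrable _ _
  rw [intervalIntegral.integral_finsetSum fun i _ => hint (by fun_prop)]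
  refine Finset.sum_congr rfl fun i _ => ?_
  rw [intervalIntegral.integral_finsetSum fun j _ => hint (by fun_prop), mulVec, dotProduct,
    Finset.mul_sum]
  refine Finset.sum_congr rfl fun j _ => ?_
  rw [gramInt, of_apply, ← intervalIntegral.integral_mul_const,
    ← intervalIntegral.integral_const_mul]
  congr 1 with τ
  ring

theorem exists_integral_sq_lt_of_not_isPECT [DecidableEq ι] {w : ℝ → ι → ℝ} (hw : Continuous w)
    (h : ¬ IsPECT w) {α T : ℝ} (hα : 0 < α) (hT : 0 < T) :
    ∃ t, 0 ≤ t ∧ ∃ x : ι → ℝ, ∫ τ in t..t + T, (x ⬝ᵥ w τ) ^ 2 < α * (x ⬝ᵥ x) := by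
  simp only [IsPECT, not_exists, not_and, not_forall] at h
  obtain ⟨t, ht, hnpsd⟩ := h α hα T hT
  obtain ⟨x, hx⟩ : ∃ x, star x ⬝ᵥ ((gramInt w t T - α • 1) *ᵥ x) < 0 := by
    by_contra! hx
    exact hnpsd (.of_dotProduct_mulVec_nonneg
      ((isHermitian_gramInt w t T).sub ((isHermitian_one (n := ι)).smul (IsSelfAdjoint.all α))) hx)
  refine ⟨t, ht, x, ?_⟩
  rwa [star_trivial, sub_mulVec, dotProduct_sub, smul_mulVec, one_mulVec, dotProduct_smul,
    smul_eq_mul, dotProduct_gramInt_mulVec hw, sub_neg] at hx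

theorem exists_unit_integral_inner_sq_lt_of_not_isPECT [DecidableEq ι]
    {w : ℝ → EuclideanSpace ℝ ι} (hw : Continuous w) (h : ¬ IsPECT (fun s => (w s : ι → ℝ)))
    {α T : ℝ} (hα : 0 < α) (hT : 0 < T) :
    ∃ t, 0 ≤ t ∧ ∃ z : EuclideanSpace ℝ ι, ‖z‖ = 1 ∧ ∫ τ in t..t + T, ⟪z, w τ⟫_ℝ ^ 2 < α := by
  have hw' : Continuous fun s => (w s : ι → ℝ) := (PiLp.continuous_ofLp 2 _).comp hw
  obtain ⟨t, ht, x, hx⟩ := exists_integral_sq_lt_of_not_isPECT hw' h hα hT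
  set v : EuclideanSpace ℝ ι := WithLp.toLp 2 x
  have hinner : ∀ u : EuclideanSpace ℝ ι, ⟪v, u⟫_ℝ = x ⬝ᵥ u := fun u => by
    simp [v, EuclideanSpace.inner_eq_star_dotProduct, dotProduct_comm]
  have hv : x ⬝ᵥ x = ‖v‖ ^ 2 := by rw [← real_inner_self_eq_norm_sq, hinner]
  have hv0 : v ≠ 0 := by
    rintro hv0
    rw [hv, hv0, norm_zero] at hx
    have := intervalIntegral.integral_nonneg (μ := volume)
      (le_add_of_nonneg_right (a := t) hT.le) fun τ _ => sq_nonneg (x ⬝ᵥ w τ)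
    linarith
  refine ⟨t, ht, ‖v‖⁻¹ • v, norm_smul_inv_norm hv0, ?_⟩
  simp_rw [real_inner_smul_left, mul_pow, hinner]
  rw [intervalIntegral.integral_const_mul]
  rw [hv] at hx
  calc ‖v‖⁻¹ ^ 2 * ∫ τ in t..t + T, (x ⬝ᵥ w τ) ^ 2 < ‖v‖⁻¹ ^ 2 * (α * ‖v‖ ^ 2) := by gcongr
    _ = α := by field_simp

end Gram

theorem exists_unit_abs_inner_le_of_not_isPECT {ι : Type} [Fintype ι] [DecidableEq ι]
    {w : ℝ → EuclideanSpace ℝ ι} (hw : Differentiable ℝ w) {M : ℝ≥0}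
    (hM : ∀ t, 0 ≤ t → ‖deriv w t‖ ≤ M) (h : ¬ IsPECT (fun s => (w s : ι → ℝ)))
    {ε T : ℝ} (hε : 0 < ε) (hT : 0 < T) :
    ∃ t, 0 ≤ t ∧ ∃ z : EuclideanSpace ℝ ι, ‖z‖ = 1 ∧ ∀ τ ∈ Icc t (t + T), |⟪z, w τ⟫_ℝ| ≤ ε := by
  obtain ⟨t, ht, z, hz, hint⟩ := exists_unit_integral_inner_sq_lt_of_not_isPECT hw.continuous h
    (α := min (ε / (2 * (M + 1))) T * (ε / 2) ^ 2) (by positivity) hT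
  refine ⟨t, ht, z, hz, abs_le_of_integral_sq_lt hε.le ?_ (by rwa [add_sub_cancel_left])⟩
  refine (convex_Icc _ _).lipschitzOnWith_of_nnnorm_hasDerivWithin_le
    (fun x _ => ((hw x).hasDerivAt.const_inner z).hasDerivWithinAt) fun x hx => ?_
  rw [← NNReal.coe_le_coe, coe_nnnorm, Real.norm_eq_abs]
  exact abs_inner_le_of_norm_eq_one hz (hM x (ht.trans hx.1))

theorem not_pe_small_direction_deriv_general {d : ℕ} (w : ℝ → EuclideanSpace ℝ (Fin d))
    (hsmooth : ContDiff ℝ 2 w)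
    (hbdd' : ∃ M' : ℝ, ∀ t : ℝ, 0 ≤ t → ‖deriv w t‖ ≤ M')
    (hbdd'' : ∃ M'' : ℝ, ∀ t : ℝ, 0 ≤ t → ‖deriv (deriv w) t‖ ≤ M'')
    (hnPE : ¬ IsPECT (fun s => (w s : Fin d → ℝ))) :
    ∀ T : ℝ, 0 < T → ∀ ε : ℝ, 0 < ε →
      ∃ t : ℝ, 0 < t ∧ ∃ z : EuclideanSpace ℝ (Fin d), ‖z‖ = 1 ∧
        ∀ τ ∈ Set.Icc t (t + T),
          |(inner ℝ z (w τ) : ℝ)| ≤ ε ∧ |(inner ℝ z (deriv w τ) : ℝ)| ≤ ε := by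
  obtain ⟨M', hM'⟩ := hbdd'
  obtain ⟨M'', hM''⟩ := hbdd''
  have hM''0 : 0 ≤ M'' := (norm_nonneg _).trans (hM'' 0 le_rfl)
  have hw : Differentiable ℝ w := hsmooth.differentiable (by norm_num)
  have hw' : Differentiable ℝ (deriv w) := (hsmooth.iterate_deriv' 1 1).differentiable (by norm_num)
  intro T hT ε hε
  set δ := ε / (M'' + 1)
  have hδ : 0 < δ := by positivity
  set ε₀ := min ε (ε * δ / 4)
  obtain ⟨t, ht, z, hz, hsmall⟩ := exists_unit_abs_inner_le_of_not_isPECT hw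
    (fun t ht => (hM' t ht).trans (Real.le_coe_toNNReal M')) hnPE
    (lt_min hε (by positivity) : 0 < ε₀) (by positivity : 0 < T + 2 * δ)
  have hε₀ : 2 * ε₀ / δ ≤ ε / 2 := by
    rw [div_le_iff₀ hδ]
    linarith [min_le_right ε (ε * δ / 4)]
  have hM''δ : M'' * δ ≤ ε := by
    rw [mul_div_assoc', div_le_iff₀ (by positivity)]
    nlinarith
  -- starting at `t + δ` makes the time positive and keeps every `[τ, τ + δ]` in the window
  refine ⟨t + δ, by linarith, z, hz, fun τ hτ => ⟨?_, ?_⟩⟩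
  · exact (hsmall τ ⟨by linarith [hτ.1], by linarith [hτ.2]⟩).trans (min_le_left _ _)
  calc |⟪z, deriv w τ⟫_ℝ| ≤ 2 * ε₀ / δ + M'' * δ / 2 :=
        abs_deriv_le_of_abs_le hδ (fun x _ => (hw x).hasDerivAt.const_inner z)
          (fun x _ => (hw' x).hasDerivAt.const_inner z)
          (fun x hx => abs_inner_le_of_norm_eq_one hz (hM'' x (by linarith [hx.1, hτ.1])))
          (hsmall τ ⟨by linarith [hτ.1], by linarith [hτ.2]⟩)
          (hsmall (τ + δ) ⟨by linarith [hτ.1], by linarith [hτ.2]⟩)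
    _ ≤ ε := by linarith

/-- failure of PE propagates to the derivative along the same direction. -/
theorem not_pe_small_direction_deriv {d : ℕ} (w : ℝ → EuclideanSpace ℝ (Fin d))
    (hsmooth : ContDiff ℝ 2 w)
    (hbdd : ∃ M : ℝ, ∀ t : ℝ, 0 ≤ t → ‖w t‖ ≤ M)
    (hbdd' : ∃ M' : ℝ, ∀ t : ℝ, 0 ≤ t → ‖deriv w t‖ ≤ M')
    (hbdd'' : ∃ M'' : ℝ, ∀ t : ℝ, 0 ≤ t → ‖deriv (deriv w) t‖ ≤ M'')
    (hnPE : ¬ IsPECT (fun s => (w s : Fin d → ℝ))) :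
    ∀ T : ℝ, 0 < T → ∀ ε : ℝ, 0 < ε →
      ∃ t : ℝ, 0 < t ∧ ∃ z : EuclideanSpace ℝ (Fin d), ‖z‖ = 1 ∧
        ∀ τ ∈ Set.Icc t (t + T),
          |(inner ℝ z (w τ) : ℝ)| ≤ ε ∧ |(inner ℝ z (deriv w τ) : ℝ)| ≤ ε :=
  not_pe_small_direction_deriv_general w hsmooth hbdd' hbdd'' hnPE
end

section
/- A vanishing additive perturbation cannot create persistency of excitation: let v, e : ℕ → ℝ^d be bounded signals with e_t → 0 as t → ∞. If v is not persistently exciting, then v + e is not persistently exciting. -/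
open Matrix

noncomputable def gramSum {ι : Type} [Fintype ι] (w : ℕ → ι → ℝ) (t T : ℕ) :
    Matrix ι ι ℝ :=
  ∑ τ ∈ Finset.Icc t (t + T), Matrix.vecMulVec (w τ) (w τ)

/-- Persistency of excitation of a discrete-time signal. -/
def IsPE {ι : Type} [Fintype ι] [DecidableEq ι] (w : ℕ → ι → ℝ) : Prop :=
  ∃ α : ℝ, 0 < α ∧ ∃ T : ℕ, 0 < T ∧ ∀ t : ℕ, (gramSum w t T - α • 1).PosSemidef

/-- Partial persistency of excitation of degree `D'`: some surjective linear map
makes the signal persistently exciting. -/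
def IsPPE {ι : Type} [Fintype ι] [DecidableEq ι] (w : ℕ → ι → ℝ) (D' : ℕ) : Prop :=
  ∃ P : (ι → ℝ) →ₗ[ℝ] (Fin D' → ℝ), Function.Surjective P ∧ IsPE (fun t => P (w t))

/-- The multi-shift stack `Q^k(w)_t = (w_{t-k+1}, …, w_t)` with zero padding. -/
def Qstack (k : ℕ) {d : ℕ} (w : ℕ → Fin d → ℝ) : ℕ → Fin k × Fin d → ℝ :=
  fun t p => if k - 1 - (p.1 : ℕ) ≤ t then w (t - (k - 1 - (p.1 : ℕ))) p.2 else 0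

/-- `A` is Schur: all complex eigenvalues lie strictly inside the unit disc. -/
def IsSchur {n : ℕ} (A : Matrix (Fin n) (Fin n) ℝ) : Prop :=
  ∀ μ : ℂ, μ ∈ spectrum ℂ (A.map (algebraMap ℝ ℂ)) → ‖μ‖ < 1

/-- Reachability of the pair `(A, B)`: the controllability matrix has full row rank. -/
def IsReachable {n m : ℕ} (A : Matrix (Fin n) (Fin n) ℝ)
    (B : Matrix (Fin n) (Fin m) ℝ) : Prop :=
  (Matrix.of fun (i : Fin n) (p : Fin n × Fin m) =>
    ((A ^ (p.1 : ℕ)) * B) i p.2).rank = n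

/-!
Persistency of excitation is stable under vanishing perturbations. If `w` is PE with level `α`
and window `T`, pick `N` after which `|e τ|² ≤ α / (4 (T + 1))`. On the window `[t + N, t + N + T]`,
`(w ⬝ x)² ≤ 2 ((w + e) ⬝ x)² + 2 |e|² |x|²`, so `w + e` is PE with level `α / 4` and window
`N + T`. The theorem follows by perturbing `v + e` by `-e`.
-/

open Filter Topology Finset

section Excitation

variable {ι : Type} [Fintype ι]

lemma dotProduct_gramSum_mulVec (w : ℕ → ι → ℝ) (t T : ℕ) (x : ι → ℝ) :
    x ⬝ᵥ gramSum w t T *ᵥ x = ∑ τ ∈ Icc t (t + T), (w τ ⬝ᵥ x) ^ 2 := by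
  rw [gramSum, sum_mulVec, dotProduct_sum]
  refine sum_congr rfl fun τ _ => ?_
  rw [dotProduct_mulVec, vecMul_vecMulVec, smul_dotProduct, smul_eq_mul, dotProduct_comm x, sq]

lemma posSemidef_gramSum (w : ℕ → ι → ℝ) (t T : ℕ) : (gramSum w t T).PosSemidef :=
  posSemidef_sum _ fun τ _ => by simpa using posSemidef_vecMulVec_self_star (w τ)

lemma isPE_iff [DecidableEq ι] (w : ℕ → ι → ℝ) :
    IsPE w ↔ ∃ α : ℝ, 0 < α ∧ ∃ T : ℕ, 0 < T ∧
      ∀ t x, α * (x ⬝ᵥ x) ≤ ∑ τ ∈ Icc t (t + T), (w τ ⬝ᵥ x) ^ 2 := by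
  have hquad : ∀ α t T x, x ⬝ᵥ (gramSum w t T - α • 1) *ᵥ x
      = ∑ τ ∈ Icc t (t + T), (w τ ⬝ᵥ x) ^ 2 - α * (x ⬝ᵥ x) := by
    intro α t T x
    rw [sub_mulVec, dotProduct_sub, dotProduct_gramSum_mulVec, smul_mulVec, one_mulVec,
      dotProduct_smul, smul_eq_mul]
  have hherm : ∀ (α : ℝ) t T, (gramSum w t T - α • 1).IsHermitian := fun α t T =>
    (posSemidef_gramSum w t T).isHermitian.sub (isHermitian_one.smul (IsSelfAdjoint.all α))
  simp only [IsPE, posSemidef_iff_dotProduct_mulVec, star_trivial, hquad, sub_nonneg, hherm,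
    true_and]

lemma sq_dotProduct_le_two_mul_sq_add (a b x : ι → ℝ) :
    (a ⬝ᵥ x) ^ 2 ≤ 2 * ((a + b) ⬝ᵥ x) ^ 2 + 2 * ((b ⬝ᵥ b) * (x ⬝ᵥ x)) := by
  have hcs : (b ⬝ᵥ x) ^ 2 ≤ (b ⬝ᵥ b) * (x ⬝ᵥ x) := by
    simpa only [dotProduct, ← sq] using sum_mul_sq_le_sq_mul_sq univ b x
  rw [add_dotProduct]
  nlinarith [sq_nonneg (a ⬝ᵥ x + 2 * (b ⬝ᵥ x))]

theorem IsPE.add_of_tendsto_zero [DecidableEq ι] {w e : ℕ → ι → ℝ}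
    (hw : IsPE w) (he : Tendsto e atTop (𝓝 0)) : IsPE (fun t => w t + e t) := by
  rw [isPE_iff] at hw ⊢
  obtain ⟨α, hα, T, hT, hwin⟩ := hw
  set ε := α / (4 * (T + 1)) with hε
  have hee : Tendsto (fun τ => e τ ⬝ᵥ e τ) atTop (𝓝 0) := by
    simpa [Function.comp_def] using
      (continuous_id.dotProduct continuous_id).tendsto (0 : ι → ℝ) |>.comp he
  obtain ⟨N, hN⟩ := eventually_atTop.mp (hee.eventually_le_const (by positivity : 0 < ε))
  refine ⟨α / 4, by positivity, N + T, by omega, fun t x => ?_⟩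
  have hxx : 0 ≤ x ⬝ᵥ x := by simpa using dotProduct_star_self_nonneg x
  calc α / 4 * (x ⬝ᵥ x) = (α * (x ⬝ᵥ x) - (T + 1) * (2 * (ε * (x ⬝ᵥ x)))) / 2 := by
        rw [hε]; field_simp; ring
    _ ≤ (∑ τ ∈ Icc (t + N) (t + N + T), ((w τ ⬝ᵥ x) ^ 2 - 2 * (ε * (x ⬝ᵥ x)))) / 2 := by
        have hcard : #(Icc (t + N) (t + N + T)) = T + 1 := by simp only [Nat.card_Icc]; omega
        rw [sum_sub_distrib, sum_const, hcard, nsmul_eq_mul]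
        push_cast
        gcongr
        exact hwin (t + N) x
    _ ≤ ∑ τ ∈ Icc (t + N) (t + N + T), ((w τ + e τ) ⬝ᵥ x) ^ 2 := by
        rw [div_le_iff₀ two_pos, sum_mul]
        refine sum_le_sum fun τ hτ => ?_
        have hτN : e τ ⬝ᵥ e τ ≤ ε := hN τ (by rw [mem_Icc] at hτ; omega)
        nlinarith [sq_dotProduct_le_two_mul_sq_add (w τ) (e τ) x,
          mul_le_mul_of_nonneg_right hτN hxx]
    _ ≤ ∑ τ ∈ Icc t (t + (N + T)), ((w τ + e τ) ⬝ᵥ x) ^ 2 :=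
        sum_le_sum_of_subset_of_nonneg (Icc_subset_Icc (by omega) (by omega))
          fun _ _ _ => sq_nonneg _

end Excitation

theorem not_pe_add_vanishing_general {d : ℕ} (v e : ℕ → Fin d → ℝ)
    (hlim : Filter.Tendsto e Filter.atTop (nhds 0))
    (hnPE : ¬ IsPE v) :
    ¬ IsPE (fun t => v t + e t) := fun hPE => hnPE <| by
  simpa using hPE.add_of_tendsto_zero (e := fun t => -e t) (by simpa using hlim.neg)

/-- a vanishing additive perturbation cannot create persistency of
excitation. -/
theorem not_pe_add_vanishing {d : ℕ} (v e : ℕ → Fin d → ℝ)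
    (hv : ∃ M : ℝ, ∀ t, ‖v t‖ ≤ M) (he : ∃ M : ℝ, ∀ t, ‖e t‖ ≤ M)
    (hlim : Filter.Tendsto e Filter.atTop (nhds 0))
    (hnPE : ¬ IsPE v) :
    ¬ IsPE (fun t => v t + e t) :=
  not_pe_add_vanishing_general v e hlim hnPE
end
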